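/- For all c > 0 and ξ, ξ' ∈ ℝ³ one has the pointwise bound |1 − (E_c(ξ)+c²)(E_c(ξ')+c²)/(N_c(ξ)N_c(ξ'))| ≤ (3c²|ξ||ξ'| + 2c³(|ξ| + |ξ'|)) / (2c⁴). -/

import Mathlib

/-!
Write `w(ξ) = (E_c(ξ) + c²) / N_c(ξ)`, so that the quantity to bound is `1 - w(ξ) w(ξ')`.
Since `w(ξ)² = (E_c(ξ) + c²) / (2 E_c(ξ))` and `c² ≤ E_c(ξ) ≤ c|ξ| + c²`, each weight lies in
`[0, 1]` with `1 - w(ξ) ≤ 1 - w(ξ)² = (E_c(ξ) - c²) / (2 E_c(ξ)) ≤ |ξ| / (2c)`.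
Then `0 ≤ 1 - w w' ≤ (1 - w) + (1 - w') ≤ (|ξ| + |ξ'|) / (2c)`, which is already smaller than the
claimed bound.
-/

open Real

noncomputable def Ec (c : ℝ) (ξ : EuclideanSpace ℝ (Fin 3)) : ℝ :=
  Real.sqrt (c ^ 2 * ‖ξ‖ ^ 2 + c ^ 4)

noncomputable def Nc (c : ℝ) (ξ : EuclideanSpace ℝ (Fin 3)) : ℝ :=
  Real.sqrt (2 * Ec c ξ * (Ec c ξ + c ^ 2))

lemma abs_one_sub_mul_le {x y : ℝ} (hx₀ : 0 ≤ x) (hx₁ : x ≤ 1) (hy₁ : y ≤ 1) :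
    |1 - x * y| ≤ (1 - x) + (1 - y) := by
  rw [abs_of_nonneg (by nlinarith)]
  nlinarith [mul_nonneg (sub_nonneg.2 hx₁) (sub_nonneg.2 hy₁)]

section Energy

variable (c : ℝ) (ξ : EuclideanSpace ℝ (Fin 3))

lemma sq_le_Ec : c ^ 2 ≤ Ec c ξ :=
  Real.le_sqrt_of_sq_le (by nlinarith [sq_nonneg (c * ‖ξ‖)])

lemma Nc_sq : Nc c ξ ^ 2 = 2 * Ec c ξ * (Ec c ξ + c ^ 2) := by
  have := sq_le_Ec c ξ
  exact Real.sq_sqrt (by nlinarith [sq_nonneg c])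

noncomputable def largeWeight : ℝ := (Ec c ξ + c ^ 2) / Nc c ξ

lemma largeWeight_nonneg : 0 ≤ largeWeight c ξ := by
  have := sq_le_Ec c ξ
  exact div_nonneg (by nlinarith [sq_nonneg c]) (Real.sqrt_nonneg _)

variable {c}

lemma Ec_le_mul_norm_add_sq (hc : 0 ≤ c) : Ec c ξ ≤ c * ‖ξ‖ + c ^ 2 :=
  (Real.sqrt_le_left (by positivity)).2
    (by nlinarith [mul_nonneg (pow_nonneg hc 3) (norm_nonneg ξ)])

lemma Ec_pos (hc : 0 < c) : 0 < Ec c ξ :=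
  (pow_pos hc 2).trans_le (sq_le_Ec c ξ)

lemma largeWeight_sq (hc : 0 < c) : largeWeight c ξ ^ 2 = (Ec c ξ + c ^ 2) / (2 * Ec c ξ) := by
  have hE := Ec_pos ξ hc
  rw [largeWeight, div_pow, Nc_sq]
  field_simp

lemma largeWeight_le_one (hc : 0 < c) : largeWeight c ξ ≤ 1 := by
  have hE := Ec_pos ξ hc
  have hsq : largeWeight c ξ ^ 2 ≤ 1 := by
    rw [largeWeight_sq ξ hc, div_le_one (by positivity)]
    linarith [sq_le_Ec c ξ]
  nlinarith [largeWeight_nonneg c ξ]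

lemma one_sub_largeWeight_le (hc : 0 < c) : 1 - largeWeight c ξ ≤ ‖ξ‖ / (2 * c) := by
  have hE := Ec_pos ξ hc
  have hw₀ := largeWeight_nonneg c ξ
  calc 1 - largeWeight c ξ ≤ 1 - largeWeight c ξ ^ 2 := by
        nlinarith [largeWeight_le_one ξ hc]
    _ = (Ec c ξ - c ^ 2) / (2 * Ec c ξ) := by
        rw [largeWeight_sq ξ hc]
        field_simp
        ring
    _ ≤ c * ‖ξ‖ / (2 * c ^ 2) := by
        gcongr
        · linarith [Ec_le_mul_norm_add_sq ξ hc.le]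
        · linarith [sq_le_Ec c ξ]
    _ = ‖ξ‖ / (2 * c) := by
        field_simp

end Energy

theorem large_component_weight_bound
    (c : ℝ) (hc : 0 < c) (ξ ξ' : EuclideanSpace ℝ (Fin 3)) :
    |1 - (Ec c ξ + c ^ 2) * (Ec c ξ' + c ^ 2) / (Nc c ξ * Nc c ξ')| ≤
      (3 * c ^ 2 * ‖ξ‖ * ‖ξ'‖ + 2 * c ^ 3 * (‖ξ‖ + ‖ξ'‖)) / (2 * c ^ 4) := by
  rw [mul_div_mul_comm]
  calc _ ≤ (1 - largeWeight c ξ) + (1 - largeWeight c ξ') :=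
        abs_one_sub_mul_le (largeWeight_nonneg c ξ) (largeWeight_le_one ξ hc)
          (largeWeight_le_one ξ' hc)
    _ ≤ ‖ξ‖ / (2 * c) + ‖ξ'‖ / (2 * c) :=
        add_le_add (one_sub_largeWeight_le ξ hc) (one_sub_largeWeight_le ξ' hc)
    _ ≤ _ := by
        rw [← add_div, div_le_div_iff₀ (by positivity) (by positivity)]
        have : 0 ≤ c ^ 3 * ‖ξ‖ * ‖ξ'‖ := by positivity
        nlinarith [mul_nonneg (pow_nonneg hc.le 4) (add_nonneg (norm_nonneg ξ) (norm_nonneg ξ'))]
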